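/- arXiv:2604.04896 — 2 statements merged into one kernel-verified Lean document; each statement's English description precedes it below -/
import Mathlib

section
/- Let M be a matroid, X₁,…,X_k ⊆ E(M) pairwise disjoint, and suppose M = M⁺ \ e and M' = M⁺ / e for some matroid M⁺ and element e. If e ∈ cl_{M⁺}(X_i) for some i ∈ [k], then ω_M(X₁,…,X_k) ≥ ω_{M'}(X₁,…,X_k). -/
open Set

namespace MatroidDepth

variable {α : Type*}

/-- The (finite) rank of a set in a matroid. -/
noncomputable def rk (M : Matroid α) (X : Set α) : ℕ :=
  sSup {n | ∃ I, M.Indep I ∧ I ⊆ X ∧ I.ncard = n}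

/-- The rank of a matroid. -/
noncomputable def rank (M : Matroid α) : ℕ := rk M M.E

/-- Deletion of a set of elements. -/
def del (M : Matroid α) (D : Set α) : Matroid α := M.restrict (M.E \ D)

/-- Contraction of a set of elements, as the dual of deletion. -/
def con (M : Matroid α) (C : Set α) : Matroid α := (del M.dual C).dual

/-- The connectivity function `λ_M`. -/
noncomputable def lam (M : Matroid α) (X : Set α) : ℤ :=
  (rk M X : ℤ) + (rk M (M.E \ X) : ℤ) - (rank M : ℤ)

/-- A circuit: a minimal dependent set. -/
def Circuit (M : Matroid α) (C : Set α) : Prop :=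
  C ⊆ M.E ∧ ¬ M.Indep C ∧ ∀ D, D ⊂ C → M.Indep D

/-- Two elements connected: equal, or on a common circuit. -/
def ConnTo (M : Matroid α) (e f : α) : Prop :=
  (e = f ∧ e ∈ M.E) ∨ ∃ C, Circuit M C ∧ e ∈ C ∧ f ∈ C

/-- A matroid is connected. -/
def Conn (M : Matroid α) : Prop :=
  M.E.Nonempty ∧ ∀ e ∈ M.E, ∀ f ∈ M.E, ConnTo M e f

/-- `A` is (the ground set of) a component of `M`: a maximal mutually-connected set. -/
def IsComponent (M : Matroid α) (A : Set α) : Prop :=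
  A ⊆ M.E ∧ A.Nonempty ∧ (∀ e ∈ A, ∀ f ∈ A, ConnTo M e f) ∧
    ∀ B, A ⊆ B → B ⊆ M.E → (∀ e ∈ B, ∀ f ∈ B, ConnTo M e f) → B ⊆ A

/-- A loop. -/
def IsLoop (M : Matroid α) (e : α) : Prop := e ∈ M.E ∧ ¬ M.Indep {e}

/-- A coloop: an element in every base. -/
def IsColoop (M : Matroid α) (e : α) : Prop := e ∈ M.E ∧ ∀ B, M.IsBase B → e ∈ B

/-- Generic recursive depth: `DepthLE step M n` says the `step`-depth of `M` is at most `n`. -/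
inductive DepthLE {α : Type*} (step : Matroid α → Matroid α → Prop) : Matroid α → ℕ → Prop
  | base (M : Matroid α) (n : ℕ) : M.E.Subsingleton → 1 ≤ n → DepthLE step M n
  | comps (M : Matroid α) (n : ℕ) : ¬ Conn M → ¬ M.E.Subsingleton →
      (∀ A, IsComponent M A → DepthLE step (M.restrict A) n) → DepthLE step M n
  | step (M M' : Matroid α) (n : ℕ) : Conn M → ¬ M.E.Subsingleton →
      step M M' → M' ≠ M → DepthLE step M' n → DepthLE step M (n + 1)

/-- The depth associated with a transformation relation `step`. -/
noncomputable def depth (step : Matroid α → Matroid α → Prop) (M : Matroid α) : ℕ :=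
  sInf {n | DepthLE step M n}

/-- c-transformation: contraction of one element. -/
def cStep (M M' : Matroid α) : Prop := ∃ e ∈ M.E, M' = con M {e}

/-- d-transformation: deletion of one element. -/
def dStep (M M' : Matroid α) : Prop := ∃ e ∈ M.E, M' = del M {e}

/-- cd-transformation. -/
def cdStep (M M' : Matroid α) : Prop := cStep M M' ∨ dStep M M'

/-- c*-transformation: extend by an element and contract it. -/
def csStep (M M' : Matroid α) : Prop :=
  ∃ (N : Matroid α) (f : α), M = del N {f} ∧ M' = con N {f}

/-- Contraction-depth. -/
noncomputable def cd (M : Matroid α) : ℕ := depth cStep M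

/-- Deletion-depth. -/
noncomputable def dd (M : Matroid α) : ℕ := depth dStep M

/-- Contraction-deletion-depth. -/
noncomputable def cdd (M : Matroid α) : ℕ := depth cdStep M

/-- c*-depth. -/
noncomputable def csd (M : Matroid α) : ℕ := depth csStep M

/-- The function ω from the paper. -/
noncomputable def omega (M : Matroid α) {k : ℕ} (X : Fin k → Set α) : ℤ :=
  (∑ i, (rk M (M.E \ X i) : ℤ)) - ((k : ℤ) - 1) * (rank M : ℤ)


open scoped Matroid

section aux2


variable {M : Matroid α} {I J X Y : Set α} {e : α}

lemma rk_eq_ncard_of_basis' [M.Finite] (h : M.IsBasis' I X) : rk M X = I.ncard := by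
  have hbdd : BddAbove {n | ∃ I, M.Indep I ∧ I ⊆ X ∧ I.ncard = n} := by
    refine ⟨M.E.ncard, ?_⟩
    rintro n ⟨J, hJ, -, rfl⟩
    exact Set.ncard_le_ncard hJ.subset_ground M.ground_finite
  have hne : {n | ∃ I, M.Indep I ∧ I ⊆ X ∧ I.ncard = n}.Nonempty :=
    ⟨0, ∅, M.empty_indep, empty_subset X, by simp⟩
  apply le_antisymm
  · refine csSup_le hne ?_
    rintro n ⟨J, hJ, hJX, rfl⟩
    obtain ⟨J', hJ', hJJ'⟩ := hJ.subset_isBasis'_of_subset hJX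
    have hfin : J'.Finite := M.set_finite J' hJ'.indep.subset_ground
    have hcard : J'.ncard = I.ncard :=
      (Matroid.isBase_restrict_iff'.mpr hJ').ncard_eq_ncard_of_isBase (Matroid.isBase_restrict_iff'.mpr h)
    exact hcard ▸ Set.ncard_le_ncard hJJ' hfin
  · exact le_csSup hbdd ⟨I, h.indep, h.subset, rfl⟩

lemma rk_restrict (M : Matroid α) {R Y : Set α} (hYR : Y ⊆ R) : rk (M ↾ R) Y = rk M Y := by
  unfold rk
  congr 1
  ext n
  constructor
  · rintro ⟨I, hI, hIY, rfl⟩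
    exact ⟨I, hI.of_restrict, hIY, rfl⟩
  · rintro ⟨I, hI, hIY, rfl⟩
    exact ⟨I, hI.indep_restrict_of_subset (hIY.trans hYR), hIY, rfl⟩

lemma rk_insert_le (M : Matroid α) [M.Finite] (e : α) (Z : Set α) :
    rk M (insert e Z) ≤ rk M Z + 1 := by
  obtain ⟨I, hI⟩ := M.exists_isBasis' Z
  obtain ⟨J, hJ, hIJ⟩ := hI.indep.subset_isBasis'_of_subset (hI.subset.trans (subset_insert e Z))
  rw [rk_eq_ncard_of_basis' hI, rk_eq_ncard_of_basis' hJ]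
  have hJsub : J ⊆ insert e I := by
    intro x hxJ
    by_contra hx
    simp only [mem_insert_iff, not_or] at hx
    have hxZ : x ∈ Z := (hJ.subset hxJ).resolve_left hx.1
    exact hI.insert_not_indep ⟨hxZ, hx.2⟩ (hJ.indep.subset (insert_subset hxJ hIJ))
  calc J.ncard ≤ (insert e I).ncard :=
        Set.ncard_le_ncard hJsub ((M.set_finite I hI.indep.subset_ground).insert e)
    _ ≤ I.ncard + 1 := Set.ncard_insert_le e I

lemma rk_insert_of_mem_closure (M : Matroid α) [M.Finite] (h : e ∈ M.closure Z) :
    rk M (insert e Z) = rk M Z := by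
  obtain ⟨I, hI⟩ := M.exists_isBasis' Z
  have hI' : M.IsBasis' I (insert e Z) := by
    rw [Matroid.isBasis'_iff_isBasis_closure, Matroid.closure_insert_eq_of_mem_closure h]
    exact ⟨hI.isBasis_closure_right, hI.subset.trans (subset_insert e Z)⟩
  rw [rk_eq_ncard_of_basis' hI, rk_eq_ncard_of_basis' hI']

lemma con_ground (M : Matroid α) (C : Set α) : (con M C).E = M.E \ C := rfl

lemma con_base_iff (Mp : Matroid α) (he : e ∈ Mp.E) {B : Set α} :
    (con Mp {e}).IsBase B ↔
      ∃ B₀, Mp.IsBase B₀ ∧ Mp.IsBasis (B₀ ∩ {e}) {e} ∧ B = B₀ \ {e} := by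
  have hSE : Mp.E \ {e} ⊆ Mp✶.E := diff_subset
  have hcompl : Mp.E \ (Mp.E \ {e}) = {e} := by
    rw [diff_diff_cancel_left (singleton_subset_iff.mpr he)]
  constructor
  · intro h
    have hBsub : B ⊆ Mp.E \ {e} := h.subset_ground
    have hN : (Mp✶ ↾ (Mp✶.E \ {e})).IsBase ((Mp.E \ {e}) \ B) := by
      have := (Matroid.dual_isBase_iff (M := Mp✶ ↾ (Mp✶.E \ {e})) (B := B) hBsub).mp h
      simpa using this
    rw [Matroid.isBase_restrict_iff'] at hN
    have hN' : Mp✶.IsBasis ((Mp.E \ {e}) \ B) (Mp.E \ {e}) := by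
      have := hN.isBasis (by simpa using hSE)
      simpa using this
    obtain ⟨Bs, hBs, hEq⟩ := hN'.exists_isBase
    refine ⟨Mp.E \ Bs, hBs.compl_isBase_of_dual, ?_, ?_⟩
    · rw [hBs.compl_isBase_of_dual.inter_isBasis_iff_compl_inter_isBasis_dual
        (X := {e}) (singleton_subset_iff.mpr he),
        diff_diff_cancel_left (show Bs ⊆ Mp.E from hBs.subset_ground), ← hEq]
      exact hN'
    · have h1 : B = (Mp.E \ {e}) \ ((Mp.E \ {e}) \ B) := (diff_diff_cancel_left hBsub).symm
      rw [h1, hEq]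
      ext x
      simp only [mem_diff, mem_inter_iff, mem_singleton_iff]
      tauto
  · rintro ⟨B₀, hB₀, hbasis, rfl⟩
    have hJ : Mp✶.IsBasis ((Mp.E \ B₀) ∩ (Mp.E \ {e})) (Mp.E \ {e}) :=
      hB₀.compl_inter_isBasis_of_inter_isBasis hbasis
    have hNbase : (Mp✶ ↾ (Mp✶.E \ {e})).IsBase ((Mp.E \ B₀) ∩ (Mp.E \ {e})) := by
      rw [Matroid.isBase_restrict_iff']
      exact (Matroid.isBasis'_iff_isBasis (by simpa using hSE)).mpr (by simpa using hJ)
    have hkey : B₀ \ {e} = (Mp✶ ↾ (Mp✶.E \ {e})).E \ ((Mp.E \ B₀) ∩ (Mp.E \ {e})) := by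
      have hB₀E := hB₀.subset_ground
      ext x
      have hxE := @hB₀E x
      simp only [Matroid.restrict_ground_eq, Matroid.dual_ground, mem_diff, mem_inter_iff,
        mem_singleton_iff, not_and, not_not]
      tauto
    show ((Mp✶ ↾ (Mp✶.E \ {e}))✶).IsBase (B₀ \ {e})
    rw [hkey]
    exact hNbase.compl_isBase_dual

lemma loop_notMem_base {Mp : Matroid α} {e : α} (hl : ¬ Mp.Indep {e}) {B : Set α}
    (hB : Mp.IsBase B) : e ∉ B :=
  fun heB => hl (hB.indep.subset (singleton_subset_iff.mpr heB))

lemma con_indep_iff_nonloop {Mp : Matroid α} {e : α} (he : e ∈ Mp.E) (hne : Mp.Indep {e})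
    {I : Set α} : (con Mp {e}).Indep I ↔ e ∉ I ∧ Mp.Indep (insert e I) := by
  constructor
  · intro h
    obtain ⟨B, hB, hIB⟩ := Matroid.Indep.exists_isBase_superset h
    rw [con_base_iff Mp he] at hB
    obtain ⟨B₀, hB₀, hbas, rfl⟩ := hB
    have heB₀ : e ∈ B₀ := by
      by_contra hcon
      have hBe : B₀ ∩ {e} = ∅ := by
        ext x; simp only [mem_inter_iff, mem_singleton_iff, mem_empty_iff_false, iff_false,
          not_and]
        rintro hx rfl; exact hcon hx
      rw [hBe, Matroid.empty_isBasis_iff] at hbas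
      have h2 : e ∉ Mp.closure ({e} \ {e}) := hne.notMem_closure_diff_of_mem (mem_singleton e)
      rw [sdiff_self] at h2
      change e ∉ Mp.closure ∅ at h2
      exact h2 (hbas (mem_singleton e))
    refine ⟨fun heI => (hIB heI).2 rfl, hB₀.indep.subset ?_⟩
    exact insert_subset heB₀ (hIB.trans diff_subset)
  · rintro ⟨heI, hind⟩
    obtain ⟨B₀, hB₀, hsub⟩ := hind.exists_isBase_superset
    have heB₀ : e ∈ B₀ := hsub (mem_insert e I)
    have hbas : Mp.IsBasis (B₀ ∩ {e}) {e} := by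
      have h1 : B₀ ∩ {e} = {e} := by
        ext x; simp only [mem_inter_iff, mem_singleton_iff, and_iff_right_iff_imp]
        rintro rfl; exact heB₀
      rw [h1]; exact hne.isBasis_self
    have hb : (con Mp {e}).IsBase (B₀ \ {e}) := (con_base_iff Mp he).mpr ⟨B₀, hB₀, hbas, rfl⟩
    exact hb.indep.subset (subset_diff_singleton ((subset_insert e I).trans hsub) heI)

lemma con_indep_iff_loop {Mp : Matroid α} {e : α} (he : e ∈ Mp.E) (hl : ¬ Mp.Indep {e})
    {I : Set α} : (con Mp {e}).Indep I ↔ e ∉ I ∧ Mp.Indep I := by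
  constructor
  · intro h
    obtain ⟨B, hB, hIB⟩ := Matroid.Indep.exists_isBase_superset h
    rw [con_base_iff Mp he] at hB
    obtain ⟨B₀, hB₀, hbas, rfl⟩ := hB
    exact ⟨fun heI => (hIB heI).2 rfl, hB₀.indep.subset (hIB.trans diff_subset)⟩
  · rintro ⟨heI, hind⟩
    obtain ⟨B₀, hB₀, hsub⟩ := hind.exists_isBase_superset
    have heB₀ : e ∉ B₀ := loop_notMem_base hl hB₀
    have hbas : Mp.IsBasis (B₀ ∩ {e}) {e} := by
      have h1 : B₀ ∩ {e} = ∅ := by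
        ext x; simp only [mem_inter_iff, mem_singleton_iff, mem_empty_iff_false, iff_false,
          not_and]
        rintro hx rfl; exact heB₀ hx
      rw [h1, Matroid.empty_isBasis_iff]
      obtain ⟨J, hJ⟩ := Mp.exists_isBasis {e} (singleton_subset_iff.mpr he)
      have hJe : J = ∅ := by
        rcases subset_singleton_iff_eq.mp hJ.subset with h | h
        · exact h
        · exact absurd (h ▸ hJ.indep) hl
      have h2 := hJ.subset_closure
      rwa [hJe] at h2
    have hb : (con Mp {e}).IsBase (B₀ \ {e}) := (con_base_iff Mp he).mpr ⟨B₀, hB₀, hbas, rfl⟩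
    exact hb.indep.subset (subset_diff_singleton hsub heI)

lemma rk_con_nonloop {Mp : Matroid α} [Mp.Finite] {e : α} (he : e ∈ Mp.E)
    (hne : Mp.Indep {e}) {Y : Set α} (hY : Y ⊆ Mp.E \ {e}) :
    rk (con Mp {e}) Y + 1 = rk Mp (insert e Y) := by
  haveI : (con Mp {e}).Finite := ⟨Mp.ground_finite.subset diff_subset⟩
  obtain ⟨I, hI⟩ := (con Mp {e}).exists_isBasis' Y
  obtain ⟨heI, hind⟩ := (con_indep_iff_nonloop he hne).mp hI.indep
  have hins : Mp.IsBasis' (insert e I) (insert e Y) := by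
    refine (hind.isBasis_of_subset_of_subset_closure (insert_subset_insert hI.subset) ?_).isBasis'
    intro y hy
    rcases mem_insert_iff.mp hy with rfl | hyY
    · exact Mp.mem_closure_of_mem' (mem_insert y I) he
    by_cases hyI : y ∈ I
    · exact Mp.mem_closure_of_mem' (mem_insert_of_mem e hyI) (hY hyY).1
    have hyne : y ≠ e := fun h => (hY hyY).2 (h ▸ rfl)
    have hnot : ¬ (con Mp {e}).Indep (insert y I) := hI.insert_not_indep ⟨hyY, hyI⟩
    rw [con_indep_iff_nonloop he hne] at hnot
    push_neg at hnot
    have h2 : ¬ Mp.Indep (insert e (insert y I)) := by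
      apply hnot
      simp only [mem_insert_iff, not_or]
      exact ⟨fun h => hyne h.symm, heI⟩
    rw [insert_comm] at h2
    have h3 := hind.insert_indep_iff_of_notMem
      (show y ∉ insert e I by simp [hyne, hyI])
    by_contra hcl
    exact h2 (h3.mpr ⟨(hY hyY).1, hcl⟩)
  rw [rk_eq_ncard_of_basis' hI, rk_eq_ncard_of_basis' hins,
    Set.ncard_insert_of_notMem heI (Mp.set_finite I ((subset_insert e I).trans hind.subset_ground))]

lemma rk_con_loop {Mp : Matroid α} {e : α} (he : e ∈ Mp.E) (hl : ¬ Mp.Indep {e})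
    {Y : Set α} (hY : Y ⊆ Mp.E \ {e}) : rk (con Mp {e}) Y = rk Mp Y := by
  unfold rk
  congr 1
  ext n
  constructor
  · rintro ⟨I, hI, hIY, rfl⟩
    exact ⟨I, ((con_indep_iff_loop he hl).mp hI).2, hIY, rfl⟩
  · rintro ⟨I, hI, hIY, rfl⟩
    exact ⟨I, (con_indep_iff_loop he hl).mpr ⟨fun hc => (hY (hIY hc)).2 rfl, hI⟩, hIY, rfl⟩



end aux2

theorem stmt2 {α : Type*} (M M' Mp : Matroid α) [Mp.Finite] (e : α) (he : e ∈ Mp.E)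
    (hM : M = del Mp {e}) (hM' : M' = con Mp {e})
    (k : ℕ) (hk : 1 ≤ k) (X : Fin k → Set α) (hX : ∀ i, X i ⊆ M.E)
    (hdisj : Pairwise (Function.onFun Disjoint X))
    (hcl : ∃ i, e ∈ Mp.closure (X i)) :
    omega M' X ≤ omega M X := by
  subst hM hM'
  obtain ⟨i, hi⟩ := hcl
  set S := Mp.E \ {e} with hS
  have hgM : (del Mp {e}).E = S := rfl
  have hgM' : (con Mp {e}).E = S := rfl
  have hXS : ∀ j, X j ⊆ S := hX
  have heX : ∀ j, e ∉ X j := fun j hc => (hXS j hc).2 rfl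
  have hins : ∀ j, insert e (S \ X j) = Mp.E \ X j := by
    intro j
    rw [hS, diff_diff_comm, insert_diff_singleton,
      insert_eq_self.mpr (show e ∈ Mp.E \ X j from ⟨he, heX j⟩)]
  have hinsS : insert e S = Mp.E := by
    rw [hS, insert_diff_singleton, insert_eq_self.mpr he]
  have hrk_M : ∀ Y, Y ⊆ S → rk (del Mp {e}) Y = rk Mp Y := fun Y hY => rk_restrict Mp hY
  have homega_M : omega (del Mp {e}) X =
      (∑ j, (rk Mp (S \ X j) : ℤ)) - ((k : ℤ) - 1) * (rk Mp S : ℤ) := by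
    unfold omega rank
    rw [hgM, hrk_M S (subset_refl S)]
    congr 1
    exact Finset.sum_congr rfl fun j _ => by rw [hrk_M (S \ X j) diff_subset]
  by_cases hl : Mp.Indep {e}
  · -- e is not a loop
    have haj : ∀ j, rk (con Mp {e}) (S \ X j) + 1 = rk Mp (Mp.E \ X j) := by
      intro j
      rw [← hins j]
      exact rk_con_nonloop he hl diff_subset
    have hrank' : rk (con Mp {e}) S + 1 = rk Mp S := by
      have h1 := rk_con_nonloop he hl (subset_refl S)
      rw [hinsS] at h1
      rw [h1, ← hinsS, rk_insert_of_mem_closure Mp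
        (Mp.closure_subset_closure (hXS i) hi)]
    have hbj : ∀ j, j ≠ i → rk Mp (Mp.E \ X j) = rk Mp (S \ X j) := by
      intro j hj
      have hsub : X i ⊆ S \ X j := subset_diff.mpr ⟨hXS i, hdisj (Ne.symm hj)⟩
      rw [← hins j, rk_insert_of_mem_closure Mp (Mp.closure_subset_closure hsub hi)]
    have hbi : rk Mp (Mp.E \ X i) ≤ rk Mp (S \ X i) + 1 := by
      rw [← hins i]
      exact rk_insert_le Mp e _
    have hsum : (∑ j, (rk Mp (Mp.E \ X j) : ℤ)) ≤ (∑ j, (rk Mp (S \ X j) : ℤ)) + 1 := by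
      have key : ∀ j, (rk Mp (Mp.E \ X j) : ℤ) ≤
          (rk Mp (S \ X j) : ℤ) + (if j = i then 1 else 0) := by
        intro j
        by_cases hj : j = i
        · subst hj
          simp only [if_pos rfl]
          exact_mod_cast hbi
        · rw [hbj j hj, if_neg hj]
          simp
      calc (∑ j, (rk Mp (Mp.E \ X j) : ℤ))
          ≤ ∑ j, ((rk Mp (S \ X j) : ℤ) + (if j = i then 1 else 0)) :=
            Finset.sum_le_sum fun j _ => key j
        _ = (∑ j, (rk Mp (S \ X j) : ℤ)) + 1 := by
            rw [Finset.sum_add_distrib]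
            simp
    have homega_M' : omega (con Mp {e}) X =
        ((∑ j, (rk Mp (Mp.E \ X j) : ℤ)) - k) - ((k : ℤ) - 1) * ((rk Mp S : ℤ) - 1) := by
      unfold omega rank
      rw [hgM']
      have h2 : (rk (con Mp {e}) S : ℤ) = (rk Mp S : ℤ) - 1 := by
        have := hrank'; push_cast [← this]; ring
      rw [h2]
      congr 1
      have h3 : ∀ j, (rk (con Mp {e}) (S \ X j) : ℤ) = (rk Mp (Mp.E \ X j) : ℤ) - 1 := by
        intro j
        have := haj j; push_cast [← this]; ring
      rw [Finset.sum_congr rfl fun j _ => h3 j, Finset.sum_sub_distrib]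
      simp
    rw [homega_M, homega_M']
    have hk' : (1 : ℤ) ≤ (k : ℤ) := by exact_mod_cast hk
    nlinarith [hsum]
  · -- e is a loop
    have homega_M' : omega (con Mp {e}) X = omega (del Mp {e}) X := by
      rw [homega_M]
      unfold omega rank
      rw [hgM', rk_con_loop he hl (subset_refl S)]
      congr 1
      exact Finset.sum_congr rfl fun j _ => by rw [rk_con_loop he hl diff_subset]
    rw [homega_M']



end MatroidDepth
end

section
/- Let M be a matroid, (A,B) a bipartition of E(M), and let N be an extension of M by a single element e (i.e., N \ e = M) such that e is not a loop of N and e ∈ cl_N(A) ∩ cl_N(B). Then λ_{N/e}(A) = λ_M(A) − 1, where λ denotes the connectivity function and N/e has ground set E(M). -/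
open Set

namespace MatroidDepth

variable {α : Type*}

lemma rk_eq_ncard {M : Matroid α} (hE : M.E.Finite) {I X : Set α} (hI : M.IsBasis' I X) :
    rk M X = I.ncard := by
  have hbdd : ∀ n ∈ {n | ∃ J, M.Indep J ∧ J ⊆ X ∧ J.ncard = n}, n ≤ I.ncard := by
    rintro n ⟨J, hJ, hJX, rfl⟩
    obtain ⟨J', hJ', hJJ'⟩ := hJ.subset_isBasis'_of_subset hJX
    have h1 : (M.restrict X).IsBase J' := Matroid.isBase_restrict_iff'.2 hJ'
    have h2 : (M.restrict X).IsBase I := Matroid.isBase_restrict_iff'.2 hI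
    have hfin : J'.Finite := hE.subset hJ'.indep.subset_ground
    calc J.ncard ≤ J'.ncard := Set.ncard_le_ncard hJJ' hfin
      _ = I.ncard := h1.ncard_eq_ncard_of_isBase h2
  refine le_antisymm (csSup_le ⟨I.ncard, I, hI.indep, hI.subset, rfl⟩ hbdd)
    (le_csSup ⟨I.ncard, hbdd⟩ ⟨I, hI.indep, hI.subset, rfl⟩)


lemma rk_congr {M M' : Matroid α} {X : Set α}
    (h : ∀ J, J ⊆ X → (M.Indep J ↔ M'.Indep J)) : rk M X = rk M' X := by
  unfold rk
  congr 1
  ext n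
  constructor
  · rintro ⟨J, hJ, hJX, rfl⟩; exact ⟨J, (h J hJX).1 hJ, hJX, rfl⟩
  · rintro ⟨J, hJ, hJX, rfl⟩; exact ⟨J, (h J hJX).2 hJ, hJX, rfl⟩

lemma con_ground_s18 {N : Matroid α} {e : α} : (con N {e}).E = N.E \ {e} := rfl

lemma con_indep_iff {N : Matroid α} {e : α}
    (hexB : ∃ B, N.dual.IsBase B ∧ e ∉ B) (hcl : e ∈ N.dual.closure (N.E \ {e}))
    (I : Set α) :
    (con N {e}).Indep I ↔ N.Indep (insert e I) ∧ I ⊆ N.E \ {e} := by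
  obtain ⟨B₀, hB₀, heB₀⟩ := hexB
  have hRE : N.E \ {e} ⊆ N.dual.E := diff_subset
  have hbasis : ∀ B, N.dual.IsBasis' B (N.E \ {e}) ↔ N.dual.IsBase B ∧ e ∉ B := by
    intro B
    constructor
    · intro hB
      have hclB : N.dual.closure B = N.dual.closure (N.E \ {e}) := hB.closure_eq_closure
      have : N.dual.E ⊆ N.dual.closure B := by
        rw [hclB]
        intro x hx
        rcases eq_or_ne x e with rfl | hne
        · exact hcl
        · exact N.dual.subset_closure (N.E \ {e}) hRE ⟨hx, hne⟩
      exact ⟨hB.indep.isBase_of_ground_subset_closure this, fun heB => (hB.subset heB).2 rfl⟩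
    · rintro ⟨hB, heB⟩
      have hBR : B ⊆ N.E \ {e} := fun x hx => ⟨hB.subset_ground hx, fun hxe => heB (hxe ▸ hx)⟩
      refine (hB.indep.isBasis_of_subset_of_subset_closure hBR ?_).isBasis'
      rw [hB.closure_eq]
      exact hRE
  have heE : e ∈ N.E := N.dual.closure_subset_ground _ hcl
  have hdisj : ∀ B : Set α, Disjoint (insert e I) B ↔ e ∉ B ∧ Disjoint I B := by
    intro B
    rw [Set.insert_eq, Set.disjoint_union_left, Set.disjoint_singleton_left]
  have h1 : (con N {e}).Indep I ↔ I ⊆ N.E \ {e} ∧ ∃ B, N.dual.IsBase B ∧ e ∉ B ∧ Disjoint I B := by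
    rw [con, del, Matroid.dual_indep_iff_exists']
    simp only [Matroid.restrict_ground_eq, Matroid.dual_ground]
    constructor
    · rintro ⟨hIR, B, hB, hdis⟩
      rw [Matroid.isBase_restrict_iff', hbasis] at hB
      exact ⟨hIR, B, hB.1, hB.2, hdis⟩
    · rintro ⟨hIR, B, hB1, hB2, hdis⟩
      exact ⟨hIR, B, Matroid.isBase_restrict_iff'.2 ((hbasis B).2 ⟨hB1, hB2⟩), hdis⟩
  rw [h1]
  constructor
  · rintro ⟨hIR, B, hB, heB, hdis⟩
    refine ⟨?_, hIR⟩
    rw [← N.dual_dual, Matroid.dual_indep_iff_exists']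
    exact ⟨insert_subset heE (hIR.trans diff_subset), B, hB, (hdisj B).2 ⟨heB, hdis⟩⟩
  · rintro ⟨hIe, hIR⟩
    rw [← N.dual_dual, Matroid.dual_indep_iff_exists'] at hIe
    obtain ⟨-, B, hB, hdis⟩ := hIe
    rw [hdisj B] at hdis
    exact ⟨hIR, B, hB, hdis.1, hdis.2⟩


lemma rk_con {N : Matroid α} {e : α} (hE : N.E.Finite)
    (hexB : ∃ B, N.dual.IsBase B ∧ e ∉ B) (hcl : e ∈ N.dual.closure (N.E \ {e}))
    {X : Set α} (hX : X ⊆ N.E \ {e}) :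
    rk (con N {e}) X + 1 = rk N (insert e X) := by
  obtain ⟨I, hI⟩ := (con N {e}).exists_isBasis' X
  have hiff := con_indep_iff hexB hcl
  have hIc := (hiff I).1 hI.indep
  have heI : e ∉ I := fun h => (hIc.2 h).2 rfl
  have hIb : N.IsBasis' (insert e I) (insert e X) := by
    refine ⟨⟨hIc.1, insert_subset_insert hI.subset⟩, ?_⟩
    rintro J ⟨hJ, hJX⟩ hIJ
    have heJ : e ∈ J := hIJ (mem_insert _ _)
    have hJX' : J \ {e} ⊆ X := by
      rintro x ⟨hxJ, hxe⟩
      rcases hJX hxJ with rfl | h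
      · exact absurd rfl hxe
      · exact h
    have hJ' : (con N {e}).Indep (J \ {e}) := (hiff _).2
      ⟨by rwa [Set.insert_diff_singleton, Set.insert_eq_of_mem heJ], hJX'.trans hX⟩
    have hIJ' : I ⊆ J \ {e} := fun x hx =>
      ⟨hIJ (Set.mem_insert_of_mem _ hx), fun hxe => heI (by rwa [← Set.mem_singleton_iff.1 hxe])⟩
    have hsub : J \ {e} ⊆ I := hI.2 ⟨hJ', hJX'⟩ hIJ'
    intro x hxJ
    rcases eq_or_ne x e with rfl | hne
    · exact Set.mem_insert _ _
    · exact Set.mem_insert_of_mem _ (hsub ⟨hxJ, hne⟩)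
  have hIfin : I.Finite := hE.subset ((Set.subset_insert e I).trans hIc.1.subset_ground)
  rw [rk_eq_ncard (by exact hE.subset diff_subset : (con N {e}).E.Finite) hI,
    rk_eq_ncard hE hIb, Set.ncard_insert_of_notMem heI hIfin]

lemma rk_insert_closure {N : Matroid α} {e : α} {X : Set α} (hE : N.E.Finite)
    (hX : X ⊆ N.E) (h : e ∈ N.closure X) : rk N (insert e X) = rk N X := by
  obtain ⟨I, hI⟩ := N.exists_isBasis X hX
  have heE : e ∈ N.E := N.closure_subset_ground X h
  have hIcl : N.closure I = N.closure X := hI.closure_eq_closure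
  have hb : N.IsBasis I (insert e X) := by
    refine hI.indep.isBasis_of_subset_of_subset_closure
      (hI.subset.trans (Set.subset_insert _ _)) ?_
    rw [hIcl]
    exact Set.insert_subset h (N.subset_closure X hX)
  rw [rk_eq_ncard hE hb.isBasis', rk_eq_ncard hE hI.isBasis']

lemma rk_del {N : Matroid α} {e : α} {X : Set α} (hX : X ⊆ N.E \ {e}) :
    rk (del N {e}) X = rk N X := by
  refine rk_congr fun J hJX => ?_
  rw [del, Matroid.restrict_indep_iff, and_iff_left (hJX.trans hX)]

theorem stmt18 {α : Type*} (M N : Matroid α) [N.Finite] (e : α) (he : e ∈ N.E)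
    (hM : M = del N {e}) (hnl : N.Indep {e})
    (A B : Set α) (hAB : A ∪ B = M.E) (hd : Disjoint A B)
    (hclA : e ∈ N.closure A) (hclB : e ∈ N.closure B) (hpos : 0 < lam M A) :
    lam (con N {e}) A = lam M A - 1 := by
  subst hM
  have hE : N.E.Finite := N.ground_finite
  have hME : (del N {e}).E = N.E \ {e} := rfl
  have hA : A ⊆ N.E \ {e} := by rw [← hME, ← hAB]; exact Set.subset_union_left
  have hB : B ⊆ N.E \ {e} := by rw [← hME, ← hAB]; exact Set.subset_union_right
  have hBeq : (N.E \ {e}) \ A = B := by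
    rw [← hME, ← hAB, Set.union_diff_cancel_left (Set.disjoint_iff.1 hd)]
  obtain ⟨Bb, hBb, heBb⟩ := hnl.exists_isBase_superset
  have hexB : ∃ Bd, N.dual.IsBase Bd ∧ e ∉ Bd :=
    ⟨N.E \ Bb, hBb.compl_isBase_dual, fun h => h.2 (heBb rfl)⟩
  have hcl : e ∈ N.dual.closure (N.E \ {e}) := by
    obtain ⟨Bd, hBd, heBd⟩ := hexB
    have hsub : Bd ⊆ N.E \ {e} := fun x hx =>
      ⟨hBd.subset_ground hx, fun hxe => heBd (by rwa [← Set.mem_singleton_iff.1 hxe])⟩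
    rw [hBd.closure_of_superset hsub]
    exact he
  have hclE : e ∈ N.closure (N.E \ {e}) := N.closure_subset_closure hA hclA
  have hins : insert e (N.E \ {e}) = N.E := by
    rw [Set.insert_diff_singleton, Set.insert_eq_of_mem he]
  have h1 : rk (con N {e}) A + 1 = rk N A := by
    rw [rk_con hE hexB hcl hA, rk_insert_closure hE (hA.trans diff_subset) hclA]
  have h2 : rk (con N {e}) B + 1 = rk N B := by
    rw [rk_con hE hexB hcl hB, rk_insert_closure hE (hB.trans diff_subset) hclB]
  have h3 : rk (con N {e}) (N.E \ {e}) + 1 = rk N N.E := by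
    rw [rk_con hE hexB hcl subset_rfl, hins]
  have h5 : rk N (N.E \ {e}) = rk N N.E := by
    rw [← rk_insert_closure hE diff_subset hclE, hins]
  have h4A : rk (del N {e}) A = rk N A := rk_del hA
  have h4B : rk (del N {e}) B = rk N B := rk_del hB
  have h4E : rk (del N {e}) (N.E \ {e}) = rk N (N.E \ {e}) := rk_del subset_rfl
  have hconE : (con N {e}).E = N.E \ {e} := rfl
  simp only [lam, rank, hconE, hME, hBeq, h4A, h4B, h4E, h5]
  have e1 : (rk (con N {e}) A : ℤ) = (rk N A : ℤ) - 1 := by exact_mod_cast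
    (by push_cast [← h1]; ring : (rk (con N {e}) A : ℤ) = (rk N A : ℤ) - 1)
  omega

end MatroidDepth
end
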